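/- With Γ ⊂ ℝⁿ a nonempty compact C¹-smooth embedded submanifold of dimension k (1 ≤ k ≤ n−1), ρ > 0 satisfying δ(p, r) > r/2 for all p ∈ Γ and 0 < r < 2ρ, and W ⊂ ℝ^{n+1} defined as below: if S ⊆ ℝⁿ × (0, +∞) is any set with S ∩ (ℝⁿ × (0, ρ)) ⊆ W, then for every x ∈ Γ the tangent cone satisfies Tan(S, (x,0)) ⊆ T_xΓ × [0, +∞), where T_xΓ ⊆ ℝⁿ is the tangent space to Γ at x. -/

import Mathlib

open Metric Set Filter
open scoped RealInnerProductSpace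

noncomputable section

/-- `ℝⁿ` as a Euclidean space. -/
abbrev En (n : ℕ) : Type := EuclideanSpace ℝ (Fin n)

/-- `ℝ^{n+1}` identified with `ℝⁿ × ℝ`, with the Euclidean (L²) norm. -/
abbrev En1 (n : ℕ) : Type := WithLp 2 (En n × ℝ)

/-- The identification of the plain product `ℝⁿ × ℝ` with the L²-product. -/
def emb1 (n : ℕ) : En n × ℝ → En1 n := (WithLp.equiv 2 (En n × ℝ)).symm

/-- First (ℝⁿ) coordinate of a point of `ℝ^{n+1} = ℝⁿ × ℝ`. -/
def fst1 (n : ℕ) (q : En1 n) : En n := ((WithLp.equiv 2 (En n × ℝ)) q).1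

/-- Second (ℝ) coordinate of a point of `ℝ^{n+1} = ℝⁿ × ℝ`. -/
def snd1 (n : ℕ) (q : En1 n) : ℝ := ((WithLp.equiv 2 (En n × ℝ)) q).2

/-- The (Federer) tangent cone of a set `S` at a point `p`: all vectors `w` for which
there are sequences `q i ∈ S` and `c i > 0` with `q i → p` and `c i • (q i − p) → w`. -/
def fTan {E : Type*} [NormedAddCommGroup E] [NormedSpace ℝ E] (S : Set E) (p : E) : Set E :=
  {w | ∃ (q : ℕ → E) (c : ℕ → ℝ), (∀ i, q i ∈ S) ∧ (∀ i, 0 < c i) ∧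
    Filter.Tendsto q Filter.atTop (nhds p) ∧
    Filter.Tendsto (fun i => c i • (q i - p)) Filter.atTop (nhds w)}

/-- A unit normal to `Γ` at `p`: a unit vector orthogonal to the tangent space
(= tangent cone, for a C¹ submanifold) of `Γ` at `p`. -/
def IsUnitNormal {n : ℕ} (Γ : Set (En n)) (p ν : En n) : Prop :=
  ‖ν‖ = 1 ∧ ∀ w ∈ fTan Γ p, inner ℝ ν w = (0 : ℝ)

/-- `δ(p, r) = inf_ν dist(p + rν, Γ)`, the infimum over all unit normals `ν` to `Γ` at `p`. -/
def deltaG {n : ℕ} (Γ : Set (En n)) (p : En n) (r : ℝ) : ℝ :=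
  sInf {d : ℝ | ∃ ν : En n, IsUnitNormal Γ p ν ∧ d = Metric.infDist (p + r • ν) Γ}

/-- `Γ ⊆ ℝⁿ` is a C¹-smooth embedded submanifold of dimension `k`: near each of its points
it is the regular zero level set of a C¹ map into `ℝ^{n-k}`. -/
def IsC1Submanifold {n : ℕ} (k : ℕ) (Γ : Set (En n)) : Prop :=
  ∀ p ∈ Γ, ∃ (V : Set (En n)) (f : En n → EuclideanSpace ℝ (Fin (n - k))),
    IsOpen V ∧ p ∈ V ∧ ContDiffOn ℝ 1 f V ∧
    Γ ∩ V = {y ∈ V | f y = 0} ∧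
    ∀ y ∈ V, Function.Surjective ⇑(fderivWithin ℝ f V y)

/-- The set `W = (ℝⁿ × (0, ρ)) \ ( ⋃_{d(x) > 2ρ} B_{2ρ}((x,0)) ∪ ⋃_{d(x) ≤ 2ρ} B_{d(x)}((x,0)) )`,
where `d(x) = dist(x, Γ)`. -/
def Wset {n : ℕ} (Γ : Set (En n)) (ρ : ℝ) : Set (En1 n) :=
  {q : En1 n | 0 < snd1 n q ∧ snd1 n q < ρ} \
    ((⋃ x ∈ {x : En n | 2 * ρ < Metric.infDist x Γ}, Metric.ball (emb1 n (x, 0)) (2 * ρ)) ∪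
     (⋃ x ∈ {x : En n | Metric.infDist x Γ ≤ 2 * ρ},
        Metric.ball (emb1 n (x, 0)) (Metric.infDist x Γ)))

/-! Write `w = (w₁, w₂)` for a tangent vector of `S` at `(x, 0)`, realised by points
`(yᵢ, tᵢ) ∈ S` and scales `cᵢ → ∞`. Since `S` avoids the balls `B_{d(z)}((z, 0))`, every `z` near
`x` has `d(z) ≤ |(yᵢ - z, tᵢ)|`. On the other hand `Γ` is tangent at `x` to `T = ker Df(x)`, so
`d(z) ≥ |P(z - x)| - o(|z - x|)` with `P` the orthogonal projection onto `T^⊥`. Testing at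
`z = yᵢ + v / cᵢ` and rescaling by `cᵢ` gives `|P(w₁ + v)| ≤ √(|v|² + w₂²)` for every `v`; for
`v = s • P w₁` with `s` large this forces `P w₁ = 0`, i.e. `w₁ ∈ T`. By the implicit function
theorem `T ⊆ Tan(Γ, x)`. -/

open scoped Topology

section TangentCone

variable {E F : Type*} [NormedAddCommGroup E] [NormedSpace ℝ E]
  [NormedAddCommGroup F] [NormedSpace ℝ F]

theorem mem_fTan_of_eventually {S : Set E} {p w : E} {q : ℕ → E} {c : ℕ → ℝ}
    (hqS : ∀ᶠ i in atTop, q i ∈ S) (hc : ∀ᶠ i in atTop, 0 < c i)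
    (hq : Tendsto q atTop (𝓝 p)) (hcq : Tendsto (fun i => c i • (q i - p)) atTop (𝓝 w)) :
    w ∈ fTan S p := by
  obtain ⟨N, hN⟩ := eventually_atTop.mp (hqS.and hc)
  exact ⟨fun i => q (i + N), fun i => c (i + N), fun i => (hN _ (Nat.le_add_left N i)).1,
    fun i => (hN _ (Nat.le_add_left N i)).2, hq.comp (tendsto_add_atTop_nat N),
    hcq.comp (tendsto_add_atTop_nat N)⟩

theorem HasFDerivAt.mem_fTan {S : Set E} {g : F → E} {L : F →L[ℝ] E} {a : F}
    (hg : HasFDerivAt g L a) (hS : ∀ᶠ u in 𝓝 a, g u ∈ S) (v : F) :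
    L v ∈ fTan S (g a) := by
  set c : ℕ → ℝ := fun i => i + 1
  have hc : Tendsto c atTop atTop := tendsto_atTop_add_const_right _ 1 tendsto_natCast_atTop_atTop
  have hu : Tendsto (fun i => a + (c i)⁻¹ • v) atTop (𝓝 a) := by
    simpa using tendsto_const_nhds.add (hc.inv_tendsto_atTop.smul_const v)
  refine mem_fTan_of_eventually (hu.eventually hS) (.of_forall fun i => by positivity)
    (hg.continuousAt.tendsto.comp hu) (hg.lim v ?_)
  exact tendsto_norm_atTop_atTop.comp hc

theorem HasStrictFDerivAt.ker_subset_fTan [CompleteSpace E] [FiniteDimensional ℝ F] {f : E → F}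
    {A : E →L[ℝ] F} {x : E} {Γ : Set E} (hf : HasStrictFDerivAt f A x)
    (hA : Function.Surjective A) (hΓ : ∀ᶠ y in 𝓝 x, f y = f x → y ∈ Γ) :
    (A.ker : Set E) ⊆ fTan Γ x := by
  intro w hw
  have hrange : A.range = ⊤ := LinearMap.range_eq_top.mpr hA
  set g := hf.implicitFunction f A hrange (f x)
  have hg : HasStrictFDerivAt g A.ker.subtypeL 0 := hf.to_implicitFunction hrange
  have hgx : g 0 = x := hf.implicitFunction_apply_image hrange
  have hlevel : ∀ᶠ u in 𝓝 (0 : A.ker), f (g u) = f x :=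
    ((Continuous.prodMk_right (f x)).tendsto 0).eventually (hf.map_implicitFunction_eq hrange)
  have hgt : Tendsto g (𝓝 0) (𝓝 x) := hgx ▸ hg.continuousAt.tendsto
  have hgΓ : ∀ᶠ u in 𝓝 0, g u ∈ Γ := (hlevel.and (hgt.eventually hΓ)).mono fun u hu => hu.2 hu.1
  simpa [hgx] using hg.hasFDerivAt.mem_fTan hgΓ ⟨w, hw⟩

theorem tendsto_atTop_of_tendsto_smul_sub {p w : E} {q : ℕ → E} {c : ℕ → ℝ}
    (hc : ∀ i, 0 < c i) (hq : Tendsto q atTop (𝓝 p))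
    (hcq : Tendsto (fun i => c i • (q i - p)) atTop (𝓝 w)) (hw : w ≠ 0) :
    Tendsto c atTop atTop := by
  have hnorm : Tendsto (fun i => c i * ‖q i - p‖) atTop (𝓝 ‖w‖) := by
    simpa [norm_smul, abs_of_pos (hc _)] using hcq.norm
  have hpos : ∀ᶠ i in atTop, 0 < c i * ‖q i - p‖ :=
    hnorm.eventually (eventually_gt_nhds (norm_pos_iff.mpr hw))
  have hd : Tendsto (fun i => ‖q i - p‖) atTop (𝓝[>] 0) := by
    refine tendsto_nhdsWithin_iff.mpr ⟨?_, hpos.mono fun i hi => pos_of_mul_pos_right hi (hc i).le⟩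
    simpa using (hq.sub_const p).norm
  refine (hnorm.pos_mul_atTop (norm_pos_iff.mpr hw) hd.inv_tendsto_nhdsGT_zero).congr' ?_
  filter_upwards [hpos] with i hi
  have : ‖q i - p‖ ≠ 0 := (pos_of_mul_pos_right hi (hc i).le).ne'
  simp [this]

end TangentCone

section Projection

variable {E F : Type*} [NormedAddCommGroup E] [InnerProductSpace ℝ E]

theorem mem_orthogonal_of_norm_starProjection_add_le (K : Submodule ℝ E)
    [K.HasOrthogonalProjection] {u : E} {a : ℝ}
    (h : ∀ v, ‖K.starProjection (u + v)‖ ≤ √(‖v‖ ^ 2 + a ^ 2)) : u ∈ Kᗮ := by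
  rw [← Submodule.starProjection_apply_eq_zero_iff, ← norm_eq_zero]
  set b := ‖K.starProjection u‖
  -- along `v = s • P u` the left side is `(1 + s) b`, the right side only `√(s² b² + a²)`
  have hs : ∀ s : ℝ, 0 ≤ s → (1 + 2 * s) * b ^ 2 ≤ a ^ 2 := by
    intro s hs
    have hPv : K.starProjection (u + s • K.starProjection u) = (1 + s) • K.starProjection u := by
      rw [map_add, map_smul, Submodule.starProjection_eq_self_iff.mpr
        (K.starProjection_apply_mem u), add_smul, one_smul]
    have := h (s • K.starProjection u)
    rw [hPv, norm_smul, norm_smul, Real.norm_of_nonneg (by linarith),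
      Real.norm_of_nonneg hs, Real.le_sqrt (by positivity) (by positivity)] at this
    nlinarith
  by_contra hb
  have hb2 : 0 < b ^ 2 := by positivity
  have := hs (a ^ 2 / (2 * b ^ 2)) (by positivity)
  rw [show (1 + 2 * (a ^ 2 / (2 * b ^ 2))) * b ^ 2 = b ^ 2 + a ^ 2 by field_simp] at this
  linarith

variable [CompleteSpace E] [NormedAddCommGroup F] [NormedSpace ℝ F] [CompleteSpace F]

theorem exists_norm_starProjection_orthogonal_ker_le {A : E →L[ℝ] F}
    (hA : Function.Surjective A) :
    ∃ C, ∀ h, ‖A.kerᗮ.starProjection h‖ ≤ C * ‖A h‖ := by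
  obtain ⟨C, -, hC⟩ := A.exists_preimage_norm_le hA
  refine ⟨C, fun h => ?_⟩
  obtain ⟨g, hg, hgC⟩ := hC (A h)
  have hhg : h - g ∈ A.kerᗮᗮ :=
    Submodule.le_orthogonal_orthogonal _ (by simp [LinearMap.mem_ker, hg])
  rw [← Submodule.starProjection_apply_eq_zero_iff, map_sub, sub_eq_zero] at hhg
  rw [hhg]
  exact (Submodule.norm_starProjection_apply_le _ g).trans hgC

theorem HasFDerivAt.isLittleO_starProjection_orthogonal_ker {f : E → F} {A : E →L[ℝ] F} {x : E}
    {Γ : Set E} (hf : HasFDerivAt f A x) (hA : Function.Surjective A)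
    (hΓ : ∀ᶠ y in 𝓝[Γ] x, f y = f x) :
    (fun y => A.kerᗮ.starProjection (y - x)) =o[𝓝[Γ] x] (fun y => y - x) := by
  obtain ⟨C, hC⟩ := exists_norm_starProjection_orthogonal_ker_le hA
  have hlin : (fun y => A (y - x)) =o[𝓝[Γ] x] (fun y => y - x) := by
    refine (hf.isLittleO.mono nhdsWithin_le_nhds).neg_left.congr' ?_ .rfl
    filter_upwards [hΓ] with y hy
    simp [hy]
  exact (Asymptotics.IsBigO.of_bound C (.of_forall fun y => hC (y - x))).trans_isLittleO hlin

end Projection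

section DistanceToTangent

variable {E F : Type*} [NormedAddCommGroup E] [NormedSpace ℝ E]
  [NormedAddCommGroup F] [NormedSpace ℝ F]

theorem eventually_norm_map_sub_le_infDist_add {P : E →L[ℝ] F} (hP : ‖P‖ ≤ 1) {Γ : Set E}
    {x : E} (hx : x ∈ Γ) (hPΓ : (fun y => P (y - x)) =o[𝓝[Γ] x] (fun y => y - x))
    {ε : ℝ} (hε : 0 < ε) :
    ∀ᶠ z in 𝓝 x, ‖P (z - x)‖ ≤ infDist z Γ + ε * ‖z - x‖ := by
  have hP' : ∀ h, ‖P h‖ ≤ ‖h‖ := fun h => by simpa using P.le_of_opNorm_le hP h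
  obtain ⟨δ, hδ, hΓδ⟩ :=
    Metric.eventually_nhds_iff.mp (eventually_nhdsWithin_iff.mp (hPΓ.def (half_pos hε)))
  filter_upwards [ball_mem_nhds x (half_pos hδ)] with z hz
  rw [mem_ball] at hz
  rw [← sub_le_iff_le_add, le_infDist ⟨x, hx⟩]
  intro y hy
  rw [← dist_eq_norm]
  -- points `y` farther from `z` than `x` is are handled by `‖P‖ ≤ 1`; the others are near `x`
  rcases le_or_gt (dist z x) (dist z y) with hzy | hzy
  · have := hP' (z - x)
    rw [← dist_eq_norm] at this
    nlinarith [dist_nonneg (x := z) (y := x)]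
  · have hyx : dist y x < δ := by linarith [dist_triangle_left y x z]
    have hPy := hΓδ hyx hy
    have hPz : ‖P (z - x)‖ ≤ dist z y + ε / 2 * dist y x := by
      rw [← sub_add_sub_cancel z y x, map_add, dist_eq_norm, dist_eq_norm]
      exact (norm_add_le _ _).trans (add_le_add (hP' _) hPy)
    nlinarith [dist_triangle_left y x z]

theorem norm_map_add_le_sqrt_of_tendsto {P : E →L[ℝ] F} (hP : ‖P‖ ≤ 1) {Γ : Set E} {x : E}
    (hx : x ∈ Γ) (hPΓ : (fun y => P (y - x)) =o[𝓝[Γ] x] (fun y => y - x))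
    {y : ℕ → E} {t c : ℕ → ℝ} {u : E} {a r : ℝ} (hc : Tendsto c atTop atTop)
    (hy : Tendsto (fun i => c i • (y i - x)) atTop (𝓝 u))
    (ht : Tendsto (fun i => c i * t i) atTop (𝓝 a)) (hr : 0 < r)
    (hW : ∀ᶠ i in atTop, ∀ z ∈ ball x r, infDist z Γ ≤ √(‖y i - z‖ ^ 2 + t i ^ 2)) (v : E) :
    ‖P (u + v)‖ ≤ √(‖v‖ ^ 2 + a ^ 2) := by
  set z : ℕ → E := fun i => y i + (c i)⁻¹ • v
  have hcpos : ∀ᶠ i in atTop, 0 < c i := hc.eventually_gt_atTop 0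
  have hzx : Tendsto z atTop (𝓝 x) := by
    have hyx := tangentConeAt.lim_zero atTop (tendsto_norm_atTop_atTop.comp hc) hy
    have := (hyx.add (hc.inv_tendsto_atTop.smul_const v)).const_add x
    rw [zero_smul, add_zero, add_zero] at this
    exact this.congr fun i => by simp only [z]; abel
  have hcz : Tendsto (fun i => c i • (z i - x)) atTop (𝓝 (u + v)) := by
    refine (hy.add_const v).congr' ?_
    filter_upwards [hcpos] with i hci
    simp [z, smul_sub, smul_add, smul_smul, hci.ne', add_sub_right_comm]
  have hbound : ∀ ε > 0, ‖P (u + v)‖ ≤ √(‖v‖ ^ 2 + a ^ 2) + ε * ‖u + v‖ := by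
    intro ε hε
    refine le_of_tendsto_of_tendsto ((P.continuous.tendsto _).comp hcz).norm
      ((((ht.pow 2).const_add (‖v‖ ^ 2)).sqrt).add (hcz.norm.const_mul ε)) ?_
    filter_upwards [hcpos, hW, hzx.eventually (ball_mem_nhds x hr),
      hzx.eventually (eventually_norm_map_sub_le_infDist_add hP hx hPΓ hε)] with i hci hWi hzr hPz
    have hyz : ‖y i - z i‖ = (c i)⁻¹ * ‖v‖ := by
      simp [z, norm_smul, abs_of_pos hci]
    have hscale : c i * √(((c i)⁻¹ * ‖v‖) ^ 2 + t i ^ 2) = √(‖v‖ ^ 2 + (c i * t i) ^ 2) := by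
      rw [eq_comm, show ‖v‖ ^ 2 + (c i * t i) ^ 2 = c i ^ 2 * (((c i)⁻¹ * ‖v‖) ^ 2 + t i ^ 2) by
        field_simp, Real.sqrt_mul (sq_nonneg _), Real.sqrt_sq hci.le]
    calc ‖P (c i • (z i - x))‖ = c i * ‖P (z i - x)‖ := by
          rw [map_smul, norm_smul, Real.norm_of_nonneg hci.le]
      _ ≤ c i * (√(‖y i - z i‖ ^ 2 + t i ^ 2) + ε * ‖z i - x‖) := by
          gcongr
          exact hPz.trans (by gcongr; exact hWi _ hzr)
      _ = √(‖v‖ ^ 2 + (c i * t i) ^ 2) + ε * ‖c i • (z i - x)‖ := by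
          rw [mul_add, hyz, hscale, norm_smul, Real.norm_of_nonneg hci.le]
          ring
  have hlim : Tendsto (fun ε => √(‖v‖ ^ 2 + a ^ 2) + ε * ‖u + v‖) (𝓝[>] 0)
      (𝓝 (√(‖v‖ ^ 2 + a ^ 2))) := by
    simpa using ((tendsto_id.mul_const ‖u + v‖).const_add (√(‖v‖ ^ 2 + a ^ 2)) :
      Tendsto _ (𝓝 (0 : ℝ)) _).mono_left nhdsWithin_le_nhds
  exact ge_of_tendsto hlim (eventually_nhdsWithin_of_forall hbound)

end DistanceToTangent

section Wset

variable {n : ℕ}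

theorem tendsto_fst1 {w : En1 n} {x : En n} {q : ℕ → En1 n} {c : ℕ → ℝ}
    (h : Tendsto (fun i => c i • (q i - emb1 n (x, 0))) atTop (𝓝 w)) :
    Tendsto (fun i => c i • (fst1 n (q i) - x)) atTop (𝓝 (fst1 n w)) := by
  simpa [fst1, emb1, Function.comp_def] using
    ((WithLp.fstL 2 ℝ (En n) ℝ).continuous.tendsto w).comp h

theorem tendsto_snd1 {w : En1 n} {x : En n} {q : ℕ → En1 n} {c : ℕ → ℝ}
    (h : Tendsto (fun i => c i • (q i - emb1 n (x, 0))) atTop (𝓝 w)) :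
    Tendsto (fun i => c i * snd1 n (q i)) atTop (𝓝 (snd1 n w)) := by
  simpa [snd1, emb1, Function.comp_def] using
    ((WithLp.sndL 2 ℝ (En n) ℝ).continuous.tendsto w).comp h

theorem dist_emb1_zero (q : En1 n) (z : En n) :
    dist q (emb1 n (z, 0)) = √(‖fst1 n q - z‖ ^ 2 + snd1 n q ^ 2) := by
  rw [WithLp.prod_dist_eq_of_L2]
  simp [emb1, fst1, snd1, dist_eq_norm]

theorem infDist_le_sqrt_of_mem_Wset {Γ : Set (En n)} {ρ : ℝ} {q : En1 n} (hq : q ∈ Wset Γ ρ)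
    {z : En n} (hz : infDist z Γ ≤ 2 * ρ) :
    infDist z Γ ≤ √(‖fst1 n q - z‖ ^ 2 + snd1 n q ^ 2) := by
  rw [← dist_emb1_zero]
  by_contra! h
  exact hq.2 (Or.inr (mem_biUnion hz (mem_ball.mpr h)))

theorem snd1_nonneg_of_mem_fTan {S : Set (En1 n)} (hS : ∀ q ∈ S, 0 < snd1 n q) {x : En n}
    {w : En1 n} (hw : w ∈ fTan S (emb1 n (x, 0))) : 0 ≤ snd1 n w := by
  obtain ⟨q, c, hqS, hc, -, hcq⟩ := hw
  exact ge_of_tendsto' (tendsto_snd1 hcq) fun i => (mul_pos (hc i) (hS _ (hqS i))).le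

theorem fst1_mem_ker_of_mem_fTan {F : Type*} [NormedAddCommGroup F] [NormedSpace ℝ F]
    [CompleteSpace F] {Γ : Set (En n)} {x : En n} {f : En n → F} {A : En n →L[ℝ] F}
    (hx : x ∈ Γ) (hf : HasFDerivAt f A x) (hA : Function.Surjective A)
    (hΓ : ∀ᶠ y in 𝓝[Γ] x, f y = f x) {ρ : ℝ} (hρ : 0 < ρ) {S : Set (En1 n)}
    (hSW : ∀ q ∈ S, snd1 n q < ρ → q ∈ Wset Γ ρ) {w : En1 n}
    (hw : w ∈ fTan S (emb1 n (x, 0))) : fst1 n w ∈ A.ker := by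
  obtain ⟨q, c, hqS, hc, hq, hcq⟩ := hw
  rcases eq_or_ne w 0 with rfl | hw0
  · exact zero_mem _
  have ht : Tendsto (fun i => snd1 n (q i)) atTop (𝓝 0) := by
    simpa [snd1, emb1, Function.comp_def] using
      ((WithLp.sndL 2 ℝ (En n) ℝ).continuous.tendsto _).comp hq
  have hW : ∀ᶠ i in atTop, ∀ z ∈ ball x ρ,
      infDist z Γ ≤ √(‖fst1 n (q i) - z‖ ^ 2 + snd1 n (q i) ^ 2) := by
    filter_upwards [ht.eventually (eventually_lt_nhds hρ)] with i hi z hz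
    refine infDist_le_sqrt_of_mem_Wset (hSW _ (hqS i) hi) ?_
    linarith [infDist_le_dist_of_mem (x := z) hx, mem_ball.mp hz]
  rw [← Submodule.orthogonal_orthogonal A.ker]
  exact mem_orthogonal_of_norm_starProjection_add_le A.kerᗮ (a := snd1 n w) fun v =>
    norm_map_add_le_sqrt_of_tendsto (Submodule.starProjection_norm_le _) hx
      (hf.isLittleO_starProjection_orthogonal_ker hA hΓ)
      (tendsto_atTop_of_tendsto_smul_sub hc hq hcq hw0) (tendsto_fst1 hcq) (tendsto_snd1 hcq) hρ
      hW v

end Wset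

theorem statement7_general
    (n k : ℕ)
    (Γ : Set (En n))
    (hman : IsC1Submanifold k Γ)
    (ρ : ℝ) (hρ : 0 < ρ)
    (S : Set (En1 n))
    (hS : ∀ q ∈ S, 0 < snd1 n q)
    (hSW : ∀ q ∈ S, snd1 n q < ρ → q ∈ Wset Γ ρ) :
    ∀ x ∈ Γ, fTan S (emb1 n (x, 0)) ⊆
      {q : En1 n | fst1 n q ∈ fTan Γ x ∧ 0 ≤ snd1 n q} := by
  intro x hx w hw
  obtain ⟨V, f, hV, hxV, hf, hΓV, hsurj⟩ := hman x hx
  have hA : HasStrictFDerivAt f (fderivWithin ℝ f V x) x := by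
    rw [fderivWithin_of_isOpen hV hxV]
    exact (hf.contDiffAt (hV.mem_nhds hxV)).hasStrictFDerivAt one_ne_zero
  have hfx : f x = 0 := (hΓV.subset ⟨hx, hxV⟩).2
  have hlevel : ∀ᶠ y in 𝓝 x, y ∈ Γ ↔ f y = f x := by
    filter_upwards [hV.mem_nhds hxV] with y hy
    rw [hfx]
    exact ⟨fun h => (hΓV.subset ⟨h, hy⟩).2, fun h => (hΓV.symm.subset ⟨hy, h⟩).1⟩
  refine ⟨hA.ker_subset_fTan (hsurj x hxV) (hlevel.mono fun y h => h.2) ?_,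
    snd1_nonneg_of_mem_fTan hS hw⟩
  exact fst1_mem_ker_of_mem_fTan hx hA.hasFDerivAt (hsurj x hxV)
    (eventually_nhdsWithin_iff.mpr (hlevel.mono fun y h => h.1)) hρ hSW hw

/-- with `Γ ⊂ ℝⁿ` a nonempty compact C¹ embedded `k`-submanifold
(`1 ≤ k ≤ n−1`), `ρ > 0` with `δ(p, r) > r/2` for all `p ∈ Γ` and `0 < r < 2ρ`, and `W` as
defined above: if `S ⊆ ℝⁿ × (0, +∞)` satisfies `S ∩ (ℝⁿ × (0, ρ)) ⊆ W`, then for every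
`x ∈ Γ` one has `Tan(S, (x,0)) ⊆ T_xΓ × [0, +∞)`, where the tangent space `T_xΓ` is the
tangent cone of `Γ` at `x`. -/
theorem statement7
    (n k : ℕ) (hk : 1 ≤ k) (hkn : k ≤ n - 1)
    (Γ : Set (En n)) (hne : Γ.Nonempty) (hcomp : IsCompact Γ)
    (hman : IsC1Submanifold k Γ)
    (ρ : ℝ) (hρ : 0 < ρ)
    (hδ : ∀ p ∈ Γ, ∀ r : ℝ, 0 < r → r < 2 * ρ → r / 2 < deltaG Γ p r)
    (S : Set (En1 n))
    (hS : ∀ q ∈ S, 0 < snd1 n q)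
    (hSW : ∀ q ∈ S, snd1 n q < ρ → q ∈ Wset Γ ρ) :
    ∀ x ∈ Γ, fTan S (emb1 n (x, 0)) ⊆
      {q : En1 n | fst1 n q ∈ fTan Γ x ∧ 0 ≤ snd1 n q} :=
  statement7_general n k Γ hman ρ hρ S hS hSW
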